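/- arXiv:2012.07897 — 3 statements merged into one kernel-verified Lean document; each statement's English description precedes it below -/
import Mathlib

section
/- The ideal $I = (x_1y_2-x_2y_1, x_2y_3-x_3y_2, x_3y_1-x_1y_3)$ in $k[x_1,x_2,x_3,y_1,y_2,y_3]$ is radical (equivalently, the ring $k[x_i,y_i]/I$ is reduced). -/
/-!
The ideal of `2 × 2` minors of a generic matrix `(x_{rj})` is the kernel of the Segre map
`x_{rj} ↦ s_r t_j` into a polynomial ring, hence prime. The Segre map sends `x^a` to the monomial
recording the row and column sums (margins) of the exponent table `a`, so its kernel is spanned by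
binomials `x^a - x^a'` with equal margins. Such a binomial lies in the ideal of minors by induction on
the degree: if `a (r, j) ≠ 0`, then row `r` and column `j` of `a'` are nonempty, and a single exchange
`x_{rj'} x_{r'j} ≡ x_{rj} x_{r'j'}` modulo a minor makes the `(r, j)` entry of `a'` positive, after
which `x_{rj}` cancels from both monomials.
-/

open MvPolynomial

namespace Finsupp

theorem exists_apply_ne_zero_of_mapDomain_apply_ne_zero {α β M : Type*} [AddCommMonoid M]
    {f : α → β} {x : α →₀ M} {b : β} (h : x.mapDomain f b ≠ 0) : ∃ a, f a = b ∧ x a ≠ 0 := by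
  contrapose! h
  exact mapDomain_of_not_mem_image_support fun ⟨a, ha, hab⟩ => mem_support_iff.mp ha (h a hab)

theorem exists_eq_add_single_one {σ : Type*} {a : σ →₀ ℕ} {p : σ} (h : a p ≠ 0) :
    ∃ b, a = b + single p 1 :=
  ⟨a - single p 1, (sub_add_single_one_cancel h).symm⟩

theorem exists_eq_add_single_one_add_single_one {σ : Type*} {a : σ →₀ ℕ} {p q : σ}
    (hpq : p ≠ q) (hp : a p ≠ 0) (hq : a q ≠ 0) : ∃ c, a = c + single p 1 + single q 1 := by
  obtain ⟨b, rfl⟩ := exists_eq_add_single_one hq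
  obtain ⟨c, rfl⟩ := exists_eq_add_single_one (p := p) (by simpa [single_apply, hpq.symm] using hp)
  exact ⟨c, rfl⟩

end Finsupp

namespace MvPolynomial

variable {R : Type*} [CommRing R]

theorem mem_of_map_eq_zero_of_monomial_sub_mem {σ M : Type*} [AddCommGroup M] [Module R M]
    (φ : MvPolynomial σ R →ₗ[R] M) (ψ : M →ₗ[R] MvPolynomial σ R) {I : Ideal (MvPolynomial σ R)}
    (h : ∀ a, monomial a 1 - ψ (φ (monomial a 1)) ∈ I) {f : MvPolynomial σ R} (hf : φ f = 0) :
    f ∈ I := by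
  suffices ∀ g, g - ψ (φ g) ∈ I by simpa [hf] using this f
  intro g
  induction g using induction_on' with
  | monomial a c =>
    rw [← mul_one c, ← smul_eq_mul, ← smul_monomial, map_smul, map_smul, ← smul_sub]
    exact Submodule.smul_of_tower_mem I c (h a)
  | add g g' hg hg' =>
    rw [map_add, map_add, add_sub_add_comm]
    exact add_mem hg hg'

theorem prod_X_pow_eq_monomial_mapDomain {σ τ : Type*} (f : σ → τ) (a : σ →₀ ℕ) :
    (a.prod fun p n => X (f p) ^ n : MvPolynomial τ R) = monomial (a.mapDomain f) 1 := by
  rw [← rename_monomial, monomial_eq, map_one, one_mul, map_finsuppProd]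
  simp only [map_pow, rename_X]

variable {ρ ι : Type*}

variable (R ρ ι) in
noncomputable def minorsIdeal : Ideal (MvPolynomial (ρ × ι) R) :=
  Ideal.span {f | ∃ r r' j j', X (r, j) * X (r', j') - X (r, j') * X (r', j) = f}

variable (R ρ ι) in
noncomputable def segre : MvPolynomial (ρ × ι) R →ₐ[R] MvPolynomial (ρ ⊕ ι) R :=
  aeval fun p => X (Sum.inl p.1) * X (Sum.inr p.2)

variable (ρ ι) in
noncomputable def margins : (ρ × ι →₀ ℕ) →+ (ρ ⊕ ι →₀ ℕ) :=
  Finsupp.mapDomain.addMonoidHom (fun p => Sum.inl p.1) +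
    Finsupp.mapDomain.addMonoidHom (fun p => Sum.inr p.2)

theorem margins_apply (a : ρ × ι →₀ ℕ) :
    margins ρ ι a = a.mapDomain (fun p => Sum.inl p.1) + a.mapDomain (fun p => Sum.inr p.2) :=
  rfl

@[simp]
theorem margins_single (p : ρ × ι) (n : ℕ) :
    margins ρ ι (Finsupp.single p n) =
      Finsupp.single (Sum.inl p.1) n + Finsupp.single (Sum.inr p.2) n := by
  simp [margins_apply, Finsupp.mapDomain_single]

theorem degree_margins (a : ρ × ι →₀ ℕ) : (margins ρ ι a).degree = 2 * a.degree := by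
  rw [margins_apply, map_add, Finsupp.degree_mapDomain, Finsupp.degree_mapDomain, two_mul]

theorem exists_apply_ne_zero_of_margins_inl_ne_zero {a : ρ × ι →₀ ℕ} {r : ρ}
    (h : margins ρ ι a (Sum.inl r) ≠ 0) : ∃ j, a (r, j) ≠ 0 := by
  rw [margins_apply, Finsupp.add_apply,
    Finsupp.mapDomain_of_notMem_range (f := fun p : ρ × ι => Sum.inr p.2) _ _ (by simp),
    add_zero] at h
  obtain ⟨⟨r', j⟩, hr, hj⟩ := Finsupp.exists_apply_ne_zero_of_mapDomain_apply_ne_zero h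
  exact ⟨j, Sum.inl_injective hr ▸ hj⟩

theorem exists_apply_ne_zero_of_margins_inr_ne_zero {a : ρ × ι →₀ ℕ} {j : ι}
    (h : margins ρ ι a (Sum.inr j) ≠ 0) : ∃ r, a (r, j) ≠ 0 := by
  rw [margins_apply, Finsupp.add_apply,
    Finsupp.mapDomain_of_notMem_range (f := fun p : ρ × ι => Sum.inl p.1) _ _ (by simp),
    zero_add] at h
  obtain ⟨⟨r, j'⟩, hj, hr⟩ := Finsupp.exists_apply_ne_zero_of_mapDomain_apply_ne_zero h
  exact ⟨r, Sum.inr_injective hj ▸ hr⟩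

theorem segre_monomial (a : ρ × ι →₀ ℕ) (c : R) :
    segre R ρ ι (monomial a c) = monomial (margins ρ ι a) c := by
  simp only [segre, aeval_monomial, mul_pow, Finsupp.prod_mul, prod_X_pow_eq_monomial_mapDomain,
    monomial_mul, algebraMap_eq, C_mul_monomial, mul_one]
  rfl

theorem minorsIdeal_le_ker_segre : minorsIdeal R ρ ι ≤ RingHom.ker (segre R ρ ι) := by
  rw [minorsIdeal, Ideal.span_le]
  rintro _ ⟨r, r', j, j', rfl⟩
  simp only [SetLike.mem_coe, RingHom.mem_ker, segre, map_sub, map_mul, aeval_X]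
  ring

theorem monomial_exchange_sub_mem_minorsIdeal (c : ρ × ι →₀ ℕ) (r r' : ρ) (j j' : ι) :
    monomial (c + Finsupp.single (r, j') 1 + Finsupp.single (r', j) 1) (1 : R) -
      monomial (c + Finsupp.single (r', j') 1 + Finsupp.single (r, j) 1) 1 ∈ minorsIdeal R ρ ι := by
  have hminor : X (r, j') * X (r', j) - X (r, j) * X (r', j') ∈ minorsIdeal R ρ ι :=
    Ideal.subset_span ⟨r, r', j', j, rfl⟩
  convert Ideal.mul_mem_left _ (monomial c 1) hminor using 1
  simp only [monomial_add_single, pow_one]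
  ring

theorem exists_monomial_sub_mem_minorsIdeal_of_margins_ne_zero {a : ρ × ι →₀ ℕ} {r : ρ} {j : ι}
    (hr : margins ρ ι a (Sum.inl r) ≠ 0) (hj : margins ρ ι a (Sum.inr j) ≠ 0) :
    ∃ b, margins ρ ι (b + Finsupp.single (r, j) 1) = margins ρ ι a ∧
      monomial a (1 : R) - monomial (b + Finsupp.single (r, j) 1) 1 ∈ minorsIdeal R ρ ι := by
  by_cases hrj : a (r, j) ≠ 0
  · obtain ⟨b, rfl⟩ := Finsupp.exists_eq_add_single_one hrj
    exact ⟨b, rfl, by simp⟩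
  obtain ⟨j', hj'⟩ := exists_apply_ne_zero_of_margins_inl_ne_zero hr
  obtain ⟨r', hr'⟩ := exists_apply_ne_zero_of_margins_inr_ne_zero hj
  have hne : (r, j') ≠ (r', j) := by
    rintro ⟨⟩
    exact hrj hj'
  obtain ⟨c, rfl⟩ := Finsupp.exists_eq_add_single_one_add_single_one hne hj' hr'
  refine ⟨c + Finsupp.single (r', j') 1, ?_, monomial_exchange_sub_mem_minorsIdeal c r r' j j'⟩
  simp only [map_add, margins_single]
  abel

theorem monomial_sub_monomial_mem_minorsIdeal {a a' : ρ × ι →₀ ℕ}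
    (h : margins ρ ι a = margins ρ ι a') :
    monomial a (1 : R) - monomial a' 1 ∈ minorsIdeal R ρ ι := by
  induction hn : a.degree generalizing a a' with
  | zero =>
    have hn' : a'.degree = 0 := by
      simpa [degree_margins, hn] using (congrArg Finsupp.degree h).symm
    rw [(Finsupp.degree_eq_zero_iff a).1 hn, (Finsupp.degree_eq_zero_iff a').1 hn', sub_self]
    exact zero_mem _
  | succ n ih =>
    obtain ⟨p, hp⟩ : ∃ p, a p ≠ 0 := by
      by_contra! ha
      simp [show a = 0 from Finsupp.ext ha] at hn
    obtain ⟨b, rfl⟩ := Finsupp.exists_eq_add_single_one hp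
    obtain ⟨b', hb', hmem⟩ := exists_monomial_sub_mem_minorsIdeal_of_margins_ne_zero (R := R)
      (a := a') (r := p.1) (j := p.2) (by simp [← h]) (by simp [← h])
    have hbb' : margins ρ ι b = margins ρ ι b' := by
      simpa [← h] using hb'.symm
    have hb : b.degree = n := by simpa using hn
    have hshift : monomial (b + Finsupp.single p 1) (1 : R) - monomial (b' + Finsupp.single p 1) 1
        ∈ minorsIdeal R ρ ι := by
      simpa [monomial_add_single, sub_mul] using Ideal.mul_mem_right (X p) _ (ih hbb' hb)
    convert sub_mem hshift hmem using 1
    ring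

theorem ker_segre : RingHom.ker (segre R ρ ι) = minorsIdeal R ρ ι := by
  refine le_antisymm (fun f hf => ?_) minorsIdeal_le_ker_segre
  -- `ψ` sends a monomial in the image of `segre` back to a chosen monomial of its fibre.
  let ψ := (basisMonomials _ R).constr R fun b => monomial (Function.invFun (margins ρ ι) b) (1 : R)
  refine mem_of_map_eq_zero_of_monomial_sub_mem (segre R ρ ι).toLinearMap ψ (fun a => ?_) hf
  have hψ : ψ (monomial (margins ρ ι a) 1) =
      monomial (Function.invFun (margins ρ ι) (margins ρ ι a)) 1 := by
    simpa using (basisMonomials _ R).constr_basis R _ (margins ρ ι a)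
  rw [AlgHom.toLinearMap_apply, segre_monomial, hψ]
  exact monomial_sub_monomial_mem_minorsIdeal (Function.invFun_eq ⟨a, rfl⟩).symm

instance [IsDomain R] : (minorsIdeal R ρ ι).IsPrime :=
  ker_segre (R := R) ▸ RingHom.ker_isPrime _

end MvPolynomial

-- `finProdFinEquiv (r, j) = 3 * r + j`, so row `0` is `X 0, X 1, X 2` and row `1` is `X 3, X 4, X 5`.
theorem span_fin_six_minors_eq_map_minorsIdeal (k : Type*) [CommRing k] :
    Ideal.span ({X 0 * X 4 - X 1 * X 3, X 1 * X 5 - X 2 * X 4, X 2 * X 3 - X 0 * X 5} :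
      Set (MvPolynomial (Fin 6) k)) =
      (minorsIdeal k (Fin 2) (Fin 3)).map (renameEquiv k finProdFinEquiv) := by
  rw [minorsIdeal, Ideal.map_span]
  apply le_antisymm
  · rw [Ideal.span_le]
    rintro _ (rfl | rfl | rfl)
    · exact Ideal.subset_span ⟨_, ⟨0, 1, 0, 1, rfl⟩, by simp; rfl⟩
    · exact Ideal.subset_span ⟨_, ⟨0, 1, 1, 2, rfl⟩, by simp; rfl⟩
    · exact Ideal.subset_span ⟨_, ⟨0, 1, 2, 0, rfl⟩, by simp; rfl⟩
  · rw [Ideal.span_le]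
    rintro _ ⟨_, ⟨r, r', j, j', rfl⟩, rfl⟩
    set J := Ideal.span ({X 0 * X 4 - X 1 * X 3, X 1 * X 5 - X 2 * X 4, X 2 * X 3 - X 0 * X 5} :
      Set (MvPolynomial (Fin 6) k))
    have h1 : X 0 * X 4 - X 1 * X 3 ∈ J := Ideal.subset_span (by simp)
    have h2 : X 1 * X 5 - X 2 * X 4 ∈ J := Ideal.subset_span (by simp)
    have h3 : X 2 * X 3 - X 0 * X 5 ∈ J := Ideal.subset_span (by simp)
    fin_cases r <;> fin_cases r' <;> fin_cases j <;> fin_cases j' <;>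
      simp only [SetLike.mem_coe, renameEquiv_apply, map_sub, map_mul, rename_X,
        finProdFinEquiv, Equiv.coe_fn_mk, Fin.val_zero, Fin.val_one, Fin.val_two, Nat.reduceMul,
        Nat.reduceAdd, Fin.reduceFinMk] <;>
      first
      | (convert J.zero_mem using 2; ring1)
      | (convert h1 using 2 <;> ring1)
      | (convert h2 using 2 <;> ring1)
      | (convert h3 using 2 <;> ring1)
      | (convert J.neg_mem h1 using 2; ring1)
      | (convert J.neg_mem h2 using 2; ring1)
      | (convert J.neg_mem h3 using 2; ring1)

theorem minors_ideal_isRadical_general {k : Type*} [Field k] :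
    (Ideal.span ({X 0 * X 4 - X 1 * X 3,
                  X 1 * X 5 - X 2 * X 4,
                  X 2 * X 3 - X 0 * X 5} : Set (MvPolynomial (Fin 6) k))).IsRadical := by
  rw [span_fin_six_minors_eq_map_minorsIdeal]
  exact Ideal.IsPrime.isRadical inferInstance

/-- The ideal of the `2×2` minors `(x₁y₂-x₂y₁, x₂y₃-x₃y₂, x₃y₁-x₁y₃)` in
`k[x₁,x₂,x₃,y₁,y₂,y₃]` (char 0) is radical. Variables `0,1,2` are `x₁,x₂,x₃`,
and `3,4,5` are `y₁,y₂,y₃`. -/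
theorem minors_ideal_isRadical {k : Type*} [Field k] [CharZero k] :
    (Ideal.span ({X 0 * X 4 - X 1 * X 3,
                  X 1 * X 5 - X 2 * X 4,
                  X 2 * X 3 - X 0 * X 5} : Set (MvPolynomial (Fin 6) k))).IsRadical :=
  minors_ideal_isRadical_general
end

section
/- In the ring $k[X_{11},X_{21},X_{31},X_{32},X_0,X_{32}',Y_{11},Y_{21},Y_{31},Y_{32},Y_0,Y_{32}',g_{ij}]$ localized at $g_{23}$, the ideal generated by the nine equations $g_{22}X_{32}'=g_{33}X_{32}$, $g_{22}X_0=g_{23}X_{32}$, $g_{33}X_0=g_{23}X_{32}'$, the analogous three for $Y$, together with $X_{21}Y_0=Y_{21}X_0$, $X_{32}Y_0=Y_{32}X_0$, $X_{21}Y_{32}=X_{32}Y_{21}$, equals the ideal generated by $X_{32}-g_{23}^{-1}g_{22}X_0$, $X_{32}'-g_{23}^{-1}g_{33}X_0$, $Y_{32}-g_{23}^{-1}g_{22}Y_0$, $Y_{32}'-g_{23}^{-1}g_{33}Y_0$, and $X_{21}Y_0-Y_{21}X_0$; in particular the quotient is reduced. -/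
/-! Since `g₂₃` is a unit, the six equations involving the `g`'s say exactly that
`X₃₂, X₃₂', Y₃₂, Y₃₂'` take the solved values `g₂₃⁻¹g₂₂X₀, …`, and modulo these the two remaining
quadrics are multiples of `q = X₂₁Y₀ - Y₂₁X₀`. Substituting the solved values is an endomorphism
of the localization that is the identity modulo the solved ideal `J` and sends `J` into `(q)`, so
`J` is the preimage of `(q)`. As a polynomial in `Y₀`, `q` is linear with prime leading
coefficient `X₂₁` not dividing `Y₂₁X₀`, hence prime, and `(q)` stays prime after inverting
`g₂₃ ∉ (q)`. So `J` is prime. -/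

open MvPolynomial

universe u

theorem Polynomial.prime_C_mul_X_add_C_of_prime {D : Type*} [CommRing D] [IsDomain D]
    [UniqueFactorizationMonoid D] {a b : D} (ha : Prime a) (hab : ¬ a ∣ b) :
    Prime (Polynomial.C a * Polynomial.X + Polynomial.C b) :=
  UniqueFactorizationMonoid.irreducible_iff_prime.mp <|
    Polynomial.irreducible_C_mul_X_add_C ha.ne_zero (ha.irreducible.isRelPrime_iff_not_dvd.mpr hab)

theorem MvPolynomial.prime_X_mul_X_sub_X_mul_X {σ R : Type*} [CommRing R] [IsDomain R]
    [UniqueFactorizationMonoid R] {a b c d : σ} (hab : a ≠ b) (hcb : c ≠ b) (hdb : d ≠ b)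
    (hac : a ≠ c) (had : a ≠ d) : Prime (X a * X b - X c * X d : MvPolynomial σ R) := by
  classical
  let e := (renameEquiv R (Equiv.optionSubtypeNe b).symm).trans (optionEquivLeft R {i // i ≠ b})
  have he : e (X a * X b - X c * X d) = Polynomial.C (X ⟨a, hab⟩) * Polynomial.X +
      Polynomial.C (-(X ⟨c, hcb⟩ * X ⟨d, hdb⟩)) := by
    simp only [e, AlgEquiv.trans_apply, renameEquiv_apply, map_sub, map_mul, map_neg, rename_X,
      Equiv.optionSubtypeNe_symm_apply, hab, hcb, hdb, ↓reduceDIte, optionEquivLeft_X_some,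
      optionEquivLeft_X_none]
    ring
  have hndvd : ¬ (X ⟨a, hab⟩ : MvPolynomial {i // i ≠ b} R) ∣ -(X ⟨c, hcb⟩ * X ⟨d, hdb⟩) := by
    rw [dvd_neg]
    intro h
    rcases X_prime.dvd_or_dvd h with h | h <;> simp [X_dvd_X, hac, had] at h
  refine (MulEquiv.prime_iff e.toMulEquiv).mp ?_
  exact he ▸ Polynomial.prime_C_mul_X_add_C_of_prime X_prime hndvd

theorem Ideal.span_le_span_of_forall_ringHom {R : Type u} [CommRing R] {S T : Set R}
    (h : ∀ (A : Type u) [CommRing A] (f : R →+* A), (∀ t ∈ T, f t = 0) → ∀ s ∈ S, f s = 0) :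
    Ideal.span S ≤ Ideal.span T :=
  Ideal.span_le.mpr fun s hs => Ideal.Quotient.eq_zero_iff_mem.mp <|
    h _ _ (fun _ ht => Ideal.Quotient.eq_zero_iff_mem.mpr (Ideal.subset_span ht)) s hs

theorem Ideal.eq_comap_of_quotientMk_comp_eq {R : Type*} [CommRing R] {I Q : Ideal R}
    (f : R →+* R) (hf : (Ideal.Quotient.mk I).comp f = Ideal.Quotient.mk I) (hQI : Q ≤ I)
    (hIQ : I ≤ Q.comap f) : I = Q.comap f := by
  refine le_antisymm hIQ fun a ha => ?_
  have h : Ideal.Quotient.mk I (f a) = Ideal.Quotient.mk I a := RingHom.congr_fun hf a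
  rw [← Ideal.Quotient.eq_zero_iff_mem, ← h, Ideal.Quotient.eq_zero_iff_mem]
  exact hQI ha

namespace Stmt10

variable (k : Type*) [Field k]

/-- The polynomial ring `k[X₁₁,X₂₁,X₃₁,X₃₂,X₀,X₃₂',Y₁₁,Y₂₁,Y₃₁,Y₃₂,Y₀,Y₃₂',g_{ij}]`:
variables `0,…,5` are `X₁₁,X₂₁,X₃₁,X₃₂,X₀,X₃₂'`, variables `6,…,11` are
`Y₁₁,Y₂₁,Y₃₁,Y₃₂,Y₀,Y₃₂'`, and variables `12,…,20` are `g₁₁,g₁₂,…,g₃₃` (row major). -/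
abbrev P := MvPolynomial (Fin 21) k

noncomputable abbrev X21 : P k := X 1
noncomputable abbrev X32 : P k := X 3
noncomputable abbrev X0 : P k := X 4
noncomputable abbrev X32' : P k := X 5
noncomputable abbrev Y21 : P k := X 7
noncomputable abbrev Y32 : P k := X 9
noncomputable abbrev Y0 : P k := X 10
noncomputable abbrev Y32' : P k := X 11
noncomputable abbrev g22 : P k := X 16
noncomputable abbrev g23 : P k := X 17
noncomputable abbrev g33 : P k := X 20

/-- The localization of the polynomial ring at `g₂₃`. -/
abbrev L := Localization.Away (g23 k)

noncomputable abbrev φ : P k →+* L k := algebraMap (P k) (L k)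

/-- The inverse of `g₂₃` in the localization. -/
noncomputable abbrev g23inv : L k := IsLocalization.Away.invSelf (g23 k)

theorem span_solved_eq {R : Type u} [CommRing R]
    {g22 g23 g33 t x21 x32 x0 x32' y21 y32 y0 y32' : R} (ht : g23 * t = 1) :
    Ideal.span {g22 * x32' - g33 * x32, g22 * x0 - g23 * x32, g33 * x0 - g23 * x32',
      g22 * y32' - g33 * y32, g22 * y0 - g23 * y32, g33 * y0 - g23 * y32',
      x21 * y0 - y21 * x0, x32 * y0 - y32 * x0, x21 * y32 - x32 * y21} =
    Ideal.span {x32 - t * (g22 * x0), x32' - t * (g33 * x0), y32 - t * (g22 * y0),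
      y32' - t * (g33 * y0), x21 * y0 - y21 * x0} := by
  have hu {A : Type u} [CommRing A] (f : R →+* A) : f g23 * f t = 1 := by
    rw [← map_mul, ht, map_one]
  apply le_antisymm <;> refine Ideal.span_le_span_of_forall_ringHom fun A _ f hf => ?_ <;>
    simp only [Set.forall_mem_insert, Set.mem_singleton_iff, forall_eq, map_sub, map_mul] at hf ⊢
  · obtain ⟨e₁, e₂, e₃, e₄, q⟩ := hf
    exact ⟨by linear_combination f g22 * e₂ - f g33 * e₁,
      by linear_combination -f g23 * e₁ - f g22 * f x0 * hu f,
      by linear_combination -f g23 * e₂ - f g33 * f x0 * hu f,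
      by linear_combination f g22 * e₄ - f g33 * e₃,
      by linear_combination -f g23 * e₃ - f g22 * f y0 * hu f,
      by linear_combination -f g23 * e₄ - f g33 * f y0 * hu f,
      q,
      by linear_combination f y0 * e₁ - f x0 * e₃,
      by linear_combination f x21 * e₃ - f y21 * e₁ + f t * f g22 * q⟩
  · obtain ⟨-, h₂, h₃, -, h₅, h₆, q, -, -⟩ := hf
    exact ⟨by linear_combination -f t * h₂ - f x32 * hu f,
      by linear_combination -f t * h₃ - f x32' * hu f,
      by linear_combination -f t * h₅ - f y32 * hu f,
      by linear_combination -f t * h₆ - f y32' * hu f,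
      q⟩

theorem prime_quadric : Prime (X21 k * Y0 k - Y21 k * X0 k) :=
  prime_X_mul_X_sub_X_mul_X (by decide) (by decide) (by decide) (by decide) (by decide)

theorem isPrime_span_quadric : (Ideal.span {φ k (X21 k * Y0 k - Y21 k * X0 k)}).IsPrime := by
  rw [← Set.image_singleton, ← Ideal.map_span]
  have hprime := (Ideal.span_singleton_prime (prime_quadric k).ne_zero).mpr (prime_quadric k)
  refine IsLocalization.isPrime_of_isPrime_disjoint (Submonoid.powers (g23 k)) _ _ hprime ?_
  refine Set.disjoint_left.mpr ?_
  rintro _ ⟨n, rfl⟩ hn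
  obtain ⟨r, hr⟩ := Ideal.mem_span_singleton'.mp (hprime.mem_of_pow_mem n hn)
  have := congrArg (eval fun i => if i = 17 then (1 : k) else 0) hr
  simp at this

noncomputable def solvedVar : Fin 21 → L k := fun i =>
  if i = 3 then g23inv k * φ k (g22 k * X0 k)
  else if i = 5 then g23inv k * φ k (g33 k * X0 k)
  else if i = 9 then g23inv k * φ k (g22 k * Y0 k)
  else if i = 11 then g23inv k * φ k (g33 k * Y0 k)
  else φ k (X i)

noncomputable def substSolved : L k →+* L k :=
  IsLocalization.Away.lift (g23 k) (g := eval₂Hom ((φ k).comp C) (solvedVar k)) <| by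
    simpa [solvedVar] using IsLocalization.Away.algebraMap_isUnit (S := L k) (g23 k)

theorem substSolved_φ_X (i : Fin 21) : substSolved k (φ k (X i)) = solvedVar k i := by
  simp [substSolved, IsLocalization.Away.lift_eq]

theorem substSolved_g23 : substSolved k (φ k (g23 k)) = φ k (g23 k) := by
  simp [substSolved_φ_X, solvedVar]

theorem substSolved_g23inv : substSolved k (g23inv k) = g23inv k := by
  have hu : φ k (g23 k) * g23inv k = 1 := IsLocalization.Away.mul_invSelf (g23 k)
  refine left_inv_eq_right_inv ?_ hu
  rw [mul_comm, ← substSolved_g23, ← map_mul, hu, map_one]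

noncomputable def solvedIdeal : Ideal (L k) :=
  Ideal.span {φ k (X32 k) - g23inv k * φ k (g22 k * X0 k),
    φ k (X32' k) - g23inv k * φ k (g33 k * X0 k),
    φ k (Y32 k) - g23inv k * φ k (g22 k * Y0 k),
    φ k (Y32' k) - g23inv k * φ k (g33 k * Y0 k),
    φ k (X21 k * Y0 k - Y21 k * X0 k)}

theorem quotientMk_comp_substSolved :
    (Ideal.Quotient.mk (solvedIdeal k)).comp (substSolved k) =
      Ideal.Quotient.mk (solvedIdeal k) := by
  refine IsLocalization.ringHom_ext (Submonoid.powers (g23 k)) (MvPolynomial.ringHom_ext ?_ ?_)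
  · intro a
    simp [substSolved, IsLocalization.Away.lift_eq]
  · intro i
    have hmem : ∀ x ∈ _, x ∈ solvedIdeal k := fun _ hx => Ideal.subset_span hx
    simp only [Set.forall_mem_insert, Set.mem_singleton_iff, forall_eq] at hmem
    obtain ⟨h₃, h₅, h₉, h₁₁, -⟩ := hmem
    simp only [RingHom.comp_apply, substSolved_φ_X, solvedVar]
    split_ifs <;> subst_vars
    exacts [(Ideal.Quotient.eq.mpr h₃).symm, (Ideal.Quotient.eq.mpr h₅).symm,
      (Ideal.Quotient.eq.mpr h₉).symm, (Ideal.Quotient.eq.mpr h₁₁).symm, rfl]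

theorem solvedIdeal_le_comap :
    solvedIdeal k ≤ (Ideal.span {φ k (X21 k * Y0 k - Y21 k * X0 k)}).comap (substSolved k) := by
  rw [solvedIdeal, Ideal.span_le]
  simp [Set.insert_subset_iff, substSolved_φ_X, substSolved_g23inv, solvedVar]

theorem isPrime_solvedIdeal : (solvedIdeal k).IsPrime := by
  rw [Ideal.eq_comap_of_quotientMk_comp_eq (substSolved k) (quotientMk_comp_substSolved k)
    ((Ideal.span_singleton_le_iff_mem _).mpr (Ideal.subset_span (by simp)))
    (solvedIdeal_le_comap k)]
  have := isPrime_span_quadric k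
  infer_instance

/-- In the localization at `g₂₃`, the ideal generated by the nine equations equals the
ideal generated by the four solved variables together with `X₂₁Y₀ - Y₂₁X₀`; in
particular the quotient is reduced. -/
theorem ideal_eq_and_reduced :
    (Ideal.span ({φ k (g22 k * X32' k - g33 k * X32 k),
                  φ k (g22 k * X0 k - g23 k * X32 k),
                  φ k (g33 k * X0 k - g23 k * X32' k),
                  φ k (g22 k * Y32' k - g33 k * Y32 k),
                  φ k (g22 k * Y0 k - g23 k * Y32 k),
                  φ k (g33 k * Y0 k - g23 k * Y32' k),
                  φ k (X21 k * Y0 k - Y21 k * X0 k),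
                  φ k (X32 k * Y0 k - Y32 k * X0 k),
                  φ k (X21 k * Y32 k - X32 k * Y21 k)} : Set (L k)) =
      Ideal.span ({φ k (X32 k) - g23inv k * φ k (g22 k * X0 k),
                   φ k (X32' k) - g23inv k * φ k (g33 k * X0 k),
                   φ k (Y32 k) - g23inv k * φ k (g22 k * Y0 k),
                   φ k (Y32' k) - g23inv k * φ k (g33 k * Y0 k),
                   φ k (X21 k * Y0 k - Y21 k * X0 k)} : Set (L k))) ∧
    IsReduced (L k ⧸ Ideal.span ({φ k (g22 k * X32' k - g33 k * X32 k),
                  φ k (g22 k * X0 k - g23 k * X32 k),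
                  φ k (g33 k * X0 k - g23 k * X32' k),
                  φ k (g22 k * Y32' k - g33 k * Y32 k),
                  φ k (g22 k * Y0 k - g23 k * Y32 k),
                  φ k (g33 k * Y0 k - g23 k * Y32' k),
                  φ k (X21 k * Y0 k - Y21 k * X0 k),
                  φ k (X32 k * Y0 k - Y32 k * X0 k),
                  φ k (X21 k * Y32 k - X32 k * Y21 k)} : Set (L k))) := by
  have key (I : Ideal (L k)) (h : I = solvedIdeal k) : I = solvedIdeal k ∧ IsReduced (L k ⧸ I) := by
    subst h
    have := isPrime_solvedIdeal k
    exact ⟨rfl, inferInstance⟩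
  apply key
  simp only [solvedIdeal, map_sub, map_mul]
  exact span_solved_eq (IsLocalization.Away.mul_invSelf (g23 k))

end Stmt10
end

section
/- Serre relation from the commutator formulas: Let $A$ be a (non-commutative) ring containing elements $e_n$ for $n \in \mathbb{Z}$ and elements $e_{a,b}$ and $e_{a,b,c}$ for $a,b,c \in \mathbb{Z}$, satisfying: (i) $[e_d, e_k] = \sum_{a=k}^{d-1} e_{a, d+k-a}$ for $d \ge k$; (ii) $[e_{d_1,d_2}, e_k] = \big(-\sum_{a=d_1}^{k-1} e_{a, d_1+k-a, d_2}$ if $k \ge d_1$, else $\sum_{a=k}^{d_1-1} e_{a, d_1+k-a, d_2}\big) + \big(-\sum_{a=d_2}^{k-1} e_{d_1, a, d_2+k-a}$ if $k \ge d_2$, else $\sum_{a=k}^{d_2-1} e_{d_1, a, d_2+k-a}\big)$. Then for every integer $k$, $[[e_{k+1}, e_{k-1}], e_k] = 0$. -/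
open Finset

/-- Serre relation from the commutator formulas: in a ring with elements `e n`, `e₂ a b`,
`e₃ a b c` satisfying the commutator formulas (i) and (ii) of the paper, the Serre
relation `[[e (k+1), e (k-1)], e k] = 0` holds for every integer `k`. -/
theorem serre_relation {A : Type*} [Ring A]
    (e : ℤ → A) (e₂ : ℤ → ℤ → A) (e₃ : ℤ → ℤ → ℤ → A)
    (h₁ : ∀ d k : ℤ, k ≤ d →
      e d * e k - e k * e d = ∑ a ∈ Icc k (d - 1), e₂ a (d + k - a))
    (h₂ : ∀ d₁ d₂ k : ℤ,
      e₂ d₁ d₂ * e k - e k * e₂ d₁ d₂ =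
        (if d₁ ≤ k then -∑ a ∈ Icc d₁ (k - 1), e₃ a (d₁ + k - a) d₂
         else ∑ a ∈ Icc k (d₁ - 1), e₃ a (d₁ + k - a) d₂) +
        (if d₂ ≤ k then -∑ a ∈ Icc d₂ (k - 1), e₃ d₁ a (d₂ + k - a)
         else ∑ a ∈ Icc k (d₂ - 1), e₃ d₁ a (d₂ + k - a))) :
    ∀ k : ℤ,
      (e (k + 1) * e (k - 1) - e (k - 1) * e (k + 1)) * e k -
        e k * (e (k + 1) * e (k - 1) - e (k - 1) * e (k + 1)) = 0 := by
  intro k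
  have hA : e (k + 1) * e (k - 1) - e (k - 1) * e (k + 1) =
      e₂ (k - 1) (k + 1) + e₂ k k := by
    rw [h₁ (k + 1) (k - 1) (by omega)]
    have hs : Icc (k - 1) (k + 1 - 1) = ({k - 1, k} : Finset ℤ) := by
      ext x; simp [Finset.mem_Icc]; omega
    rw [hs, Finset.sum_insert (by simp), Finset.sum_singleton]
    have h1 : k + 1 + (k - 1) - (k - 1) = k + 1 := by ring
    have h2 : k + 1 + (k - 1) - k = k := by ring
    rw [h1, h2]
  have hB := h₂ (k - 1) (k + 1) k
  have hC := h₂ k k k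
  rw [if_pos (by omega : (k - 1 : ℤ) ≤ k), if_neg (by omega : ¬ (k + 1 : ℤ) ≤ k)] at hB
  rw [if_pos le_rfl, if_pos le_rfl] at hC
  have e1 : Icc (k - 1) (k - 1) = ({k - 1} : Finset ℤ) := Finset.Icc_self _
  have e2 : Icc k (k + 1 - 1) = ({k} : Finset ℤ) := by rw [show k + 1 - 1 = k by ring, Finset.Icc_self]
  have e3 : Icc k (k - 1) = (∅ : Finset ℤ) := by rw [Finset.Icc_eq_empty]; omega
  rw [e1, e2, Finset.sum_singleton, Finset.sum_singleton,
    show k - 1 + k - (k - 1) = k by ring, show k + 1 + k - k = k + 1 by ring] at hB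
  simp only [e3, Finset.sum_empty, neg_zero, add_zero] at hC
  rw [hA]
  have key : (e₂ (k - 1) (k + 1) + e₂ k k) * e k - e k * (e₂ (k - 1) (k + 1) + e₂ k k) =
      (e₂ (k - 1) (k + 1) * e k - e k * e₂ (k - 1) (k + 1)) +
      (e₂ k k * e k - e k * e₂ k k) := by noncomm_ring
  rw [key, hB, hC]
  abel
end
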